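/- Let X_1,…,X_k be flow generating vector fields on ℝ^d, B ⊂ ℝ^d Borel, and E := E(B). For every X ∈ {X_1,…,X_k} such that e^{−sX}_# L^d ≪ L^d for every s ∈ ℝ, one has the invariance e^{tX}_* 1_E = 1_E Lebesgue-a.e. on ℝ^d for every t ∈ ℝ, where e^{tX}_* 1_E denotes the pullback x ↦ 1_E(e^{tX}(x)). -/

import Mathlib

open MeasureTheory Filter Topology
open scoped RealInnerProductSpace ENNReal Classical

set_option maxHeartbeats 1000000

noncomputable section

/-- Euclidean space `ℝ^d`. -/
abbrev Euc (d : ℕ) : Type := EuclideanSpace ℝ (Fin d)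

/-- Smooth compactly supported test functions on `ℝ^d`. -/
def IsTest {d : ℕ} (φ : Euc d → ℝ) : Prop :=
  ContDiff ℝ (⊤ : ℕ∞) φ ∧ HasCompactSupport φ

/-- `f ∈ L^p_loc(ℝ^d)`. -/
def MemLpLoc {d : ℕ} {α : Type*} [NormedAddCommGroup α] (f : Euc d → α) (p : ℝ≥0∞) : Prop :=
  ∀ K : Set (Euc d), IsCompact K → MemLp f p (volume.restrict K)

/-- `g` is the weak (distributional) gradient of the scalar function `f`. -/
def HasWeakGrad {d : ℕ} (f : Euc d → ℝ) (g : Euc d → Euc d) : Prop :=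
  LocallyIntegrable f volume ∧ LocallyIntegrable g volume ∧
  ∀ φ : Euc d → ℝ, IsTest φ → ∀ v : Euc d,
    ∫ x, f x * fderiv ℝ φ x v = - ∫ x, ⟪g x, v⟫ * φ x

/-- `g` is the weak (distributional) divergence of the vector field `X`. -/
def HasWeakDiv {d : ℕ} (X : Euc d → Euc d) (g : Euc d → ℝ) : Prop :=
  LocallyIntegrable X volume ∧ LocallyIntegrable g volume ∧
  ∀ φ : Euc d → ℝ, IsTest φ →
    ∫ x, ⟪X x, gradient φ x⟫ = - ∫ x, g x * φ x

/-- `DX` is the weak (distributional) Jacobian of the vector field `X`. -/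
def HasWeakJac {d : ℕ} (X : Euc d → Euc d) (DX : Euc d → (Euc d →L[ℝ] Euc d)) : Prop :=
  LocallyIntegrable X volume ∧ LocallyIntegrable DX volume ∧
  ∀ φ : Euc d → ℝ, IsTest φ → ∀ v w : Euc d,
    ∫ x, ⟪X x, w⟫ * fderiv ℝ φ x v = - ∫ x, ⟪DX x v, w⟫ * φ x

/-- The vector field `X` belongs to `W^{1,p}_loc(ℝ^d;ℝ^d)`, with weak Jacobian `DX`. -/
def MemW1pLocV {d : ℕ} (X : Euc d → Euc d) (DX : Euc d → (Euc d →L[ℝ] Euc d)) (p : ℝ≥0∞) : Prop :=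
  HasWeakJac X DX ∧ MemLpLoc X p ∧ MemLpLoc DX p

/-- The scalar function `f` belongs to `W^{1,p}_loc(ℝ^d)`, with weak gradient `g`. -/
def MemW1pLocS {d : ℕ} (f : Euc d → ℝ) (g : Euc d → Euc d) (p : ℝ≥0∞) : Prop :=
  HasWeakGrad f g ∧ MemLpLoc f p ∧ MemLpLoc g p

/-- The stationary transport equation `div (X 1_A) - 1_A div X = 0` in the sense of
distributions, where `dX` denotes the (weak) divergence of `X`:
`-∫_A ∇φ·X dx - ∫_A φ div X dx = 0` for all test functions `φ`. -/
def TransportEq {d : ℕ} (A : Set (Euc d)) (X : Euc d → Euc d) (dX : Euc d → ℝ) : Prop :=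
  ∀ φ : Euc d → ℝ, IsTest φ →
    (- ∫ x in A, ⟪gradient φ x, X x⟫) - ∫ x in A, φ x * dX x = 0

/-- `φ` is a (weak) flow generated by the vector field `V`, in the sense of
Definition 2.4: a Carathéodory selection of solutions of the ODE `ẋ = V(x)`
(in integral form, encoding absolute continuity) for a.e. initial datum, with the
group property, pushing Lebesgue measure to absolutely continuous measures, and
stable under smooth approximation of `V` (mollifications converging in `L¹_loc`
whose classical flows push Lebesgue measure to weakly converging measures). -/
structure IsFlow {d : ℕ} (V : Euc d → Euc d) (φ : ℝ → Euc d → Euc d) : Prop where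
  locInt : LocallyIntegrable V volume
  measurable_flow : ∀ t, Measurable (φ t)
  cont : ∀ᵐ y ∂(volume : Measure (Euc d)), Continuous fun t => φ t y
  ode : ∀ᵐ y ∂(volume : Measure (Euc d)), ∀ t : ℝ,
    IntervalIntegrable (fun s => V (φ s y)) volume 0 t ∧
    φ t y = y + ∫ s in (0:ℝ)..t, V (φ s y)
  group : ∀ t s : ℝ, ∀ᵐ y ∂(volume : Measure (Euc d)), φ t (φ s y) = φ (t + s) y
  absCont : ∀ t, (volume : Measure (Euc d)).map (φ t) ≪ volume
  approx : ∃ (Vk : ℕ → Euc d → Euc d) (ψ : ℕ → ℝ → Euc d → Euc d),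
    (∀ n, ContDiff ℝ (⊤ : ℕ∞) (Vk n)) ∧
    (∀ K : Set (Euc d), IsCompact K →
      Tendsto (fun n => ∫ x in K, ‖Vk n x - V x‖) atTop (𝓝 0)) ∧
    (∀ n y, ψ n 0 y = y ∧ ∀ t, HasDerivAt (fun s => ψ n s y) (Vk n (ψ n t y)) t) ∧
    (∀ᵐ t ∂(volume : Measure ℝ), ∀ g : Euc d → ℝ, Continuous g → HasCompactSupport g →
      Tendsto (fun n => ∫ x, g (ψ n t x)) atTop (𝓝 (∫ x, g (φ t x))))

/-- The set `e^{t_{j₁}X_{j₁}} ∘ ⋯ ∘ e^{t_{jₘ}X_{jₘ}}(B)`, for `l = [(j₁,t₁),…,(jₘ,tₘ)]`;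
as `l` varies over all finite lists this describes the family `F(B)`. -/
def flowImage {d k : ℕ} (φ : Fin k → ℝ → Euc d → Euc d) (B : Set (Euc d))
    (l : List (Fin k × ℝ)) : Set (Euc d) :=
  l.foldr (fun p S => φ p.1 p.2 '' S) B

/-- `E` is (a Borel representative of) the measure-theoretic supremum of the family
`F(B)`: it is Borel, essentially contains every set of the family `F(B)`, and is
minimal (up to Lebesgue-null sets) with this property.  Equivalently,
`1_E = f_B := ⋁_{D ∈ F(B)} 1_D` a.e., i.e. `E = E(B)`. -/
def IsEssReach {d k : ℕ} (φ : Fin k → ℝ → Euc d → Euc d) (B E : Set (Euc d)) : Prop :=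
  MeasurableSet E ∧
  (∀ l : List (Fin k × ℝ), volume (flowImage φ B l \ E) = 0) ∧
  ∀ E' : Set (Euc d), MeasurableSet E' →
    (∀ l : List (Fin k × ℝ), volume (flowImage φ B l \ E') = 0) → volume (E \ E') = 0

/-- Lemma 4.1.  Let `E := E(B)`.  For every field `X_j` of the family
such that `e^{-sX_j}_# L^d ≪ L^d` for all `s ∈ ℝ`, one has the invariance
`e^{tX_j}_* 1_E = 1_E` a.e. on `ℝ^d`, for every `t ∈ ℝ`. -/
theorem stmt5 {d k : ℕ} (X : Fin k → Euc d → Euc d) (φ : Fin k → ℝ → Euc d → Euc d)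
    (hflow : ∀ j, IsFlow (X j) (φ j))
    (B : Set (Euc d)) (hB : MeasurableSet B)
    (E : Set (Euc d)) (hE : IsEssReach φ B E)
    (j : Fin k)
    (hac : ∀ s : ℝ, (volume : Measure (Euc d)).map (φ j (-s)) ≪ volume)
    (t : ℝ) :
    ∀ᵐ x ∂(volume : Measure (Euc d)),
      E.indicator (fun _ => (1 : ℝ)) (φ j t x) = E.indicator (fun _ => (1 : ℝ)) x := by
  -- preimages of null sets under the flow are null
  have pre_null : ∀ (s : ℝ) (S : Set (Euc d)), volume S = 0 →
      volume ((φ j s) ⁻¹' S) = 0 := by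
    intro s S hS
    have hsub : (φ j s) ⁻¹' S ⊆ (φ j s) ⁻¹' (toMeasurable volume S) :=
      Set.preimage_mono (subset_toMeasurable _ _)
    refine measure_mono_null hsub ?_
    have hmap : (volume : Measure (Euc d)).map (φ j s) (toMeasurable volume S)
        = volume ((φ j s) ⁻¹' (toMeasurable volume S)) :=
      Measure.map_apply ((hflow j).measurable_flow s) (measurableSet_toMeasurable _ _)
    rw [← hmap]
    exact (hflow j).absCont s (by rw [measure_toMeasurable]; exact hS)
  -- key step: E is essentially forward-invariant under every φ j s
  have key : ∀ s : ℝ, volume (E \ (φ j s) ⁻¹' E) = 0 := by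
    intro s
    have := hE.2.2 (E ∩ (φ j s) ⁻¹' E)
      (hE.1.inter (((hflow j).measurable_flow s) hE.1))
      (by
        intro l
        have hsplit : flowImage φ B l \ (E ∩ (φ j s) ⁻¹' E)
            = (flowImage φ B l \ E) ∪ (flowImage φ B l \ (φ j s) ⁻¹' E) :=
          Set.diff_inter
        rw [hsplit]
        refine measure_union_null (hE.2.1 l) ?_
        have hsub : flowImage φ B l \ (φ j s) ⁻¹' E
            ⊆ (φ j s) ⁻¹' (flowImage φ B ((j, s) :: l) \ E) := by
          intro x hx
          exact ⟨Set.mem_image_of_mem _ hx.1, hx.2⟩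
        exact measure_mono_null hsub (pre_null s _ (hE.2.1 ((j, s) :: l)))
      )
    have : volume (E \ (E ∩ (φ j s) ⁻¹' E)) = 0 := this
    rwa [Set.diff_self_inter] at this
  -- a.e. statements
  have h1 : ∀ᵐ x ∂(volume : Measure (Euc d)), x ∈ E → φ j t x ∈ E := by
    have := key t
    filter_upwards [measure_eq_zero_iff_ae_notMem.mp this] with x hx hxE
    by_contra h
    exact hx ⟨hxE, h⟩
  have h2 : ∀ᵐ x ∂(volume : Measure (Euc d)),
      φ j t x ∈ E → φ j (-t) (φ j t x) ∈ E := by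
    have hnull : volume {y | ¬ (y ∈ E → φ j (-t) y ∈ E)} = 0 := by
      refine measure_mono_null ?_ (key (-t))
      intro y hy
      push_neg at hy
      exact ⟨hy.1, hy.2⟩
    have := pre_null t _ hnull
    filter_upwards [measure_eq_zero_iff_ae_notMem.mp this] with x hx
    simpa using hx
  have h3 : ∀ᵐ x ∂(volume : Measure (Euc d)), φ j (-t) (φ j t x) = φ j 0 x := by
    have := (hflow j).group (-t) t
    filter_upwards [this] with x hx
    rw [hx, neg_add_cancel]
  have h4 : ∀ᵐ x ∂(volume : Measure (Euc d)), φ j 0 x = x := by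
    filter_upwards [(hflow j).ode] with x hx
    have := (hx 0).2
    simpa using this
  filter_upwards [h1, h2, h3, h4] with x hx1 hx2 hx3 hx4
  by_cases hxE : x ∈ E
  · rw [Set.indicator_of_mem hxE, Set.indicator_of_mem (hx1 hxE)]
  · have : φ j t x ∉ E := by
      intro h
      have := hx2 h
      rw [hx3, hx4] at this
      exact hxE this
    rw [Set.indicator_of_notMem hxE, Set.indicator_of_notMem this]
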